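/- Let λ = (λ_1 ≥ … ≥ λ_k ≥ 0) and μ = (μ_1 ≥ … ≥ μ_h ≥ 0) be partitions of lengths k and h respectively with λ_k ≥ μ_1, and let ν = (λ_1,…,λ_k,μ_1,…,μ_h) be their concatenation, a partition of length k+h. Then for all complex numbers z_1,…,z_k and y_1,…,y_h, the limit as ε → 0 (ε ∈ ℂ, ε ≠ 0) of s_ν(z_1,…,z_k, εy_1,…,εy_h)/ε^{|μ|} equals s_λ(z_1,…,z_k) · s_μ(y_1,…,y_h), where |μ| = μ_1 + … + μ_h. -/

import Mathlib

/-- The shifted Vandermonde determinant `Δ_λ(v) = det (v_i ^ (λ_j + N - j))`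
(indices `j` one-based, so the exponent is `λ j + (N - 1 - j)` for zero-based `j`). -/
def shiftedVdm {R : Type*} [CommRing R] {N : ℕ} (lam : Fin N → ℕ) (v : Fin N → R) : R :=
  Matrix.det (Matrix.of fun i j : Fin N => v i ^ (lam j + (N - 1 - (j : ℕ))))

/-- The Vandermonde product `Δ(v) = ∏_{i<j} (v i - v j)`. -/
def vdmProd {R : Type*} [CommRing R] {N : ℕ} (v : Fin N → R) : R :=
  ∏ i : Fin N, ∏ j ∈ Finset.Ioi i, (v i - v j)

/-- The 2-staircase partition `λ_{n,ℓ,ℓ'}` of length `2n`: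
its `(2j-1)`-th part is `(n-j)ℓ + ℓ'` and its `(2j)`-th part is `(n-j)ℓ` (1-based). -/
def twoStaircase (n ℓ ℓ' : ℕ) : Fin (2 * n) → ℕ := fun t =>
  if (t : ℕ) % 2 = 0 then (n - 1 - (t : ℕ) / 2) * ℓ + ℓ'
  else (n - ((t : ℕ) + 1) / 2) * ℓ

/-- The staircase partition `μ_{N,h} = ((N-1)h, (N-2)h, …, h, 0)`. -/
def staircasePart (N h : ℕ) : Fin N → ℕ := fun t => (N - 1 - (t : ℕ)) * h

/-- `exp(2πi/d)`. -/
noncomputable def qRoot (d : ℕ) : ℂ := Complex.exp (2 * Real.pi * Complex.I / (d : ℂ))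

/-!
Substitute `X t ↦ ε X t` for the last `h` variables, `ε` a new polynomial variable. In the Leibniz
expansion of `Δ_ν`, a permutation carries `ε` to the power of the sum of the column exponents
`ν_j + (k + h - 1 - j)` over the columns it sends to the last `h` rows. Since every `μ_b` is at
most every `λ_a`, the last `h` columns carry the smallest exponents, so
`Δ_ν(z, εy) = ε^{|μ| + c} Q(ε)` with `c = h(h-1)/2`, and only the block-diagonal permutations
reach that degree: `Q(0) = (z_1 ⋯ z_k)^h Δ_λ(z) Δ_μ(y)`. For `λ = μ = 0` this gives
`Δ(z, εy) = ε^c W(ε)` with `W(0) = (z_1 ⋯ z_k)^h Δ(z) Δ(y)`, which is nonzero for generic `z, y`.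
Dividing `Δ_ν = s_ν Δ` by it shows `s_ν(z, εy) = ε^{|μ|} S(ε)` with `S(0) = s_λ(z) s_μ(y)`, and the
limit is `S(0)` by continuity.
-/

section SchurSplitting

open Finset Polynomial

theorem Finset.sum_lt_sum_of_card_eq_of_forall_lt {ι M : Type*} [DecidableEq ι]
    [AddCommMonoid M] [LinearOrder M] [IsOrderedCancelAddMonoid M] {e : ι → M}
    {R S : Finset ι} (hcard : #S = #R) (hlt : ∀ i ∈ S \ R, ∀ j ∈ R \ S, e j < e i)
    (hne : S ≠ R) : ∑ j ∈ R, e j < ∑ i ∈ S, e i := by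
  have hSR : (S \ R).Nonempty := by
    rw [nonempty_iff_ne_empty, Ne, sdiff_eq_empty_iff_subset]
    exact fun hsub => hne (eq_of_subset_of_card_le hsub hcard.ge)
  have hRS : (R \ S).Nonempty := by
    rw [← card_pos, card_sdiff_comm hcard.symm]
    exact hSR.card_pos
  obtain ⟨j₀, hj₀, hmax⟩ := exists_max_image (R \ S) e hRS
  have hsdiff : ∑ j ∈ R \ S, e j < ∑ i ∈ S \ R, e i :=
    calc ∑ j ∈ R \ S, e j ≤ ∑ _j ∈ R \ S, e j₀ := sum_le_sum hmax
      _ = ∑ _i ∈ S \ R, e j₀ := by rw [sum_const, sum_const, card_sdiff_comm hcard.symm]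
      _ < ∑ i ∈ S \ R, e i := sum_lt_sum_of_nonempty hSR fun i hi => hlt i hi j₀ hj₀
  rw [← sum_inter_add_sum_sdiff R S, ← sum_inter_add_sum_sdiff S R, inter_comm]
  exact add_lt_add_right hsdiff _

section RowScaled

variable {ι A : Type*} [Fintype ι] [DecidableEq ι] [CommRing A]

theorem card_filter_perm_mem (σ : Equiv.Perm ι) (R : Finset ι) :
    #{j | σ j ∈ R} = #R := by
  rw [← card_map σ.toEmbedding]
  congr 1
  ext i
  simp

theorem coeff_det_rowScaled (R : Finset ι) (e : ι → ℕ) (c : Matrix ι ι A) (d : ℕ) :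
    (Matrix.of fun i j => (if i ∈ R then X ^ e j else 1) * C (c i j)).det.coeff d =
      ∑ σ : Equiv.Perm ι, Equiv.Perm.sign σ •
        if ∑ j with σ j ∈ R, e j = d then ∏ j, c (σ j) j else 0 := by
  rw [Matrix.det_apply, finsetSum_coeff]
  refine sum_congr rfl fun σ _ => ?_
  have hprod : ∏ j, (if σ j ∈ R then X ^ e j else 1) * C (c (σ j) j) =
      X ^ (∑ j with σ j ∈ R, e j) * C (∏ j, c (σ j) j) := by
    rw [prod_mul_distrib, prod_ite, prod_const_one, mul_one, prod_pow_eq_pow_sum, map_prod]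
  simp only [Matrix.of_apply, hprod, coeff_smul, mul_comm (X ^ _), coeff_C_mul_X_pow, eq_comm]

variable {R : Finset ι} {e : ι → ℕ}

theorem filter_perm_mem_eq {σ : Equiv.Perm ι} (hσ : ∀ j, σ j ∈ R ↔ j ∈ R) :
    ({j | σ j ∈ R} : Finset ι) = R := by
  ext j
  simp [hσ]

theorem sum_lt_sum_filter_perm_mem (hlt : ∀ i ∉ R, ∀ j ∈ R, e j < e i) {σ : Equiv.Perm ι}
    (hσ : ¬ ∀ j, σ j ∈ R ↔ j ∈ R) : ∑ j ∈ R, e j < ∑ j with σ j ∈ R, e j := by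
  refine sum_lt_sum_of_card_eq_of_forall_lt (card_filter_perm_mem σ R) ?_ fun heq => ?_
  · intro i hi j hj
    simp only [mem_sdiff, mem_filter, mem_univ, true_and] at hi hj
    exact hlt i hi.2 j hj.1
  · exact hσ fun j => by simpa using Finset.ext_iff.mp heq j

theorem coeff_det_rowScaled_of_lt (hlt : ∀ i ∉ R, ∀ j ∈ R, e j < e i) (c : Matrix ι ι A)
    {d : ℕ} (hd : d < ∑ j ∈ R, e j) :
    (Matrix.of fun i j => (if i ∈ R then X ^ e j else 1) * C (c i j)).det.coeff d = 0 := by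
  rw [coeff_det_rowScaled]
  refine sum_eq_zero fun σ _ => ?_
  have hle : ∑ j ∈ R, e j ≤ ∑ j with σ j ∈ R, e j := by
    by_cases hσ : ∀ j, σ j ∈ R ↔ j ∈ R
    · rw [filter_perm_mem_eq hσ]
    · exact (sum_lt_sum_filter_perm_mem hlt hσ).le
  rw [if_neg (by omega), smul_zero]

theorem coeff_det_rowScaled_sum (hlt : ∀ i ∉ R, ∀ j ∈ R, e j < e i) (c : Matrix ι ι A) :
    (Matrix.of fun i j => (if i ∈ R then X ^ e j else 1) * C (c i j)).det.coeff (∑ j ∈ R, e j) =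
      (Matrix.of fun i j => if (i ∈ R ↔ j ∈ R) then c i j else 0).det := by
  rw [coeff_det_rowScaled, Matrix.det_apply]
  refine sum_congr rfl fun σ _ => ?_
  by_cases hσ : ∀ j, σ j ∈ R ↔ j ∈ R
  · rw [filter_perm_mem_eq hσ, if_pos rfl]
    congr 1
    exact prod_congr rfl fun j _ => by rw [Matrix.of_apply, if_pos (hσ j)]
  · obtain ⟨j, hj⟩ := not_forall.mp hσ
    rw [if_neg (sum_lt_sum_filter_perm_mem hlt hσ).ne',
      prod_eq_zero (mem_univ j) (by rw [Matrix.of_apply, if_neg hj]), smul_zero]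

theorem exists_det_rowScaled_eq_X_pow_mul (hlt : ∀ i ∉ R, ∀ j ∈ R, e j < e i)
    (c : Matrix ι ι A) : ∃ Q : A[X],
      (Matrix.of fun i j => (if i ∈ R then X ^ e j else 1) * C (c i j)).det =
        X ^ (∑ j ∈ R, e j) * Q ∧
      Q.coeff 0 = (Matrix.of fun i j => if (i ∈ R ↔ j ∈ R) then c i j else 0).det := by
  obtain ⟨Q, hQ⟩ := X_pow_dvd_iff.mpr fun d hd => coeff_det_rowScaled_of_lt hlt c hd
  refine ⟨Q, hQ, ?_⟩
  rw [← coeff_det_rowScaled_sum hlt, hQ, coeff_X_pow_mul', if_pos le_rfl, Nat.sub_self]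

end RowScaled

def vdmExp {N : ℕ} (lam : Fin N → ℕ) (j : Fin N) : ℕ := lam j + (N - 1 - j)

section Vandermonde

variable {R S : Type*} [CommRing R] [CommRing S] {k h N : ℕ}

theorem shiftedVdm_eq_det (lam : Fin N → ℕ) (v : Fin N → R) :
    shiftedVdm lam v = (Matrix.of fun i j => v i ^ vdmExp lam j).det := rfl

theorem map_shiftedVdm {F : Type*} [FunLike F R S] [RingHomClass F R S] (f : F)
    (lam : Fin N → ℕ) (v : Fin N → R) :
    f (shiftedVdm lam v) = shiftedVdm lam (fun i => f (v i)) := by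
  change (f : R →+* S) _ = _
  rw [shiftedVdm, RingHom.map_det]
  congr 1
  ext i j
  simp

theorem map_vdmProd {F : Type*} [FunLike F R S] [RingHomClass F R S] (f : F) (v : Fin N → R) :
    f (vdmProd v) = vdmProd (fun i => f (v i)) := by
  simp only [vdmProd, map_prod, map_sub]

theorem vdmProd_eq_shiftedVdm_zero (v : Fin N → R) : vdmProd v = shiftedVdm 0 v := by
  have hdet := Matrix.det_projVandermonde 1 v
  simp only [Pi.one_apply, one_mul] at hdet
  rw [vdmProd, ← hdet, shiftedVdm]
  congr 1
  ext i j
  simp [Matrix.projVandermonde_apply, Nat.sub_sub, add_comm]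

theorem vdmProd_ne_zero [IsDomain R] {v : Fin N → R} (hv : Function.Injective v) :
    vdmProd v ≠ 0 :=
  prod_ne_zero_iff.mpr fun _ _ => prod_ne_zero_iff.mpr fun _ hj =>
    sub_ne_zero.mpr (hv.ne (mem_Ioi.mp hj).ne)

theorem vdmExp_append_castAdd (lam : Fin k → ℕ) (mu : Fin h → ℕ) (a : Fin k) :
    vdmExp (Fin.append lam mu) (Fin.castAdd h a) = vdmExp lam a + h := by
  simp only [vdmExp, Fin.append_left, Fin.val_castAdd]
  omega

theorem vdmExp_append_natAdd (lam : Fin k → ℕ) (mu : Fin h → ℕ) (b : Fin h) :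
    vdmExp (Fin.append lam mu) (Fin.natAdd k b) = vdmExp mu b := by
  simp only [vdmExp, Fin.append_right, Fin.val_natAdd]
  omega

theorem sum_vdmExp (mu : Fin h → ℕ) :
    ∑ b, vdmExp mu b = ∑ b, mu b + ∑ b, vdmExp (0 : Fin h → ℕ) b := by
  simp only [vdmExp, Pi.zero_apply, zero_add, sum_add_distrib]

theorem vdmExp_lt_of_le {lam : Fin k → ℕ} {mu : Fin h → ℕ} {a : Fin k} {b : Fin h}
    (hab : mu b ≤ lam a) : vdmExp mu b < vdmExp lam a + h := by
  have := b.isLt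
  simp only [vdmExp]
  omega

theorem det_pow_vdmExp_add (lam : Fin k → ℕ) (z : Fin k → R) :
    (Matrix.of fun a a' => z a ^ (vdmExp lam a' + h)).det = (∏ a, z a) ^ h * shiftedVdm lam z := by
  simp_rw [pow_add, mul_comm _ (z _ ^ h)]
  rw [shiftedVdm_eq_det, ← prod_pow, ← Matrix.det_mul_column]
  rfl

end Vandermonde

section Splitting

variable {R : Type*} [CommRing R] {k h : ℕ}

theorem shiftedVdm_append_eq_X_pow_mul (lam : Fin k → ℕ) (mu : Fin h → ℕ)
    (hlm : ∀ a b, mu b ≤ lam a) (z : Fin k → R) (y : Fin h → R) :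
    ∃ Q : R[X],
      shiftedVdm (Fin.append lam mu) (Fin.append (fun a => C (z a)) fun b => X * C (y b)) =
        X ^ (∑ b, vdmExp mu b) * Q ∧
      Q.coeff 0 = (∏ a, z a) ^ h * shiftedVdm lam z * shiftedVdm mu y := by
  set e : Fin k ⊕ Fin h → ℕ := fun j => vdmExp (Fin.append lam mu) (finSumFinEquiv j)
  set tail : Finset (Fin k ⊕ Fin h) := univ.map .inr
  have hlt : ∀ i ∉ tail, ∀ j ∈ tail, e j < e i := by
    rintro (a | b) ha (a' | b') hb'
    · simp [tail] at hb'
    · simpa [e, vdmExp_append_castAdd, vdmExp_append_natAdd] using vdmExp_lt_of_le (hlm a b')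
    · simp [tail] at ha
    · simp [tail] at ha
  obtain ⟨Q, hQ, hQ0⟩ :=
    exists_det_rowScaled_eq_X_pow_mul hlt (Matrix.of fun i j => Sum.elim z y i ^ e j)
  refine ⟨Q, ?_, ?_⟩
  · rw [shiftedVdm_eq_det, ← Matrix.det_submatrix_equiv_self finSumFinEquiv]
    convert hQ using 2
    · ext (a | b) j : 2 <;> simp [e, tail, mul_pow, X_pow_mul]
    · simp [e, tail, vdmExp_append_natAdd]
  · have hblock : (Matrix.of fun i j =>
        if (i ∈ tail ↔ j ∈ tail) then (Matrix.of fun i j => Sum.elim z y i ^ e j) i j else 0) =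
        Matrix.fromBlocks (Matrix.of fun a a' => z a ^ (vdmExp lam a' + h)) 0 0
          (Matrix.of fun b b' => y b ^ vdmExp mu b') := by
      ext (a | b) (a' | b') <;>
        simp [e, tail, vdmExp_append_castAdd, vdmExp_append_natAdd]
    rw [hQ0, hblock, Matrix.det_fromBlocks_zero₂₁, det_pow_vdmExp_add, shiftedVdm_eq_det mu]

end Splitting

theorem Polynomial.exists_eq_X_pow_mul_of_mul_X_pow_mul_eq {R : Type*} [CommRing R] [IsDomain R]
    {P Q W : R[X]} {m c : ℕ} (h : P * (X ^ c * W) = X ^ (m + c) * Q) (hW : W.coeff 0 ≠ 0) :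
    ∃ S, P = X ^ m * S ∧ Q.coeff 0 = S.coeff 0 * W.coeff 0 := by
  have hPW : X ^ c * (P * W) = X ^ c * (X ^ m * Q) := by linear_combination h
  replace hPW := mul_left_cancel₀ (pow_ne_zero c X_ne_zero) hPW
  have hXW : ¬ X ∣ W := fun hX => hW (X_dvd_iff.mp hX)
  obtain ⟨S, rfl⟩ := prime_X.pow_dvd_of_dvd_mul_right m hXW ⟨Q, hPW⟩
  have hQ : Q = S * W := by
    refine mul_left_cancel₀ (pow_ne_zero m X_ne_zero) ?_
    rw [← hPW, mul_assoc]
  exact ⟨S, rfl, by rw [hQ, mul_coeff_zero]⟩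

section ScaleTail

open MvPolynomial (rename)

variable (K : Type*) [CommRing K] (k h : ℕ)

noncomputable def scaleTail :
    MvPolynomial (Fin (k + h)) K →ₐ[K] (MvPolynomial (Fin (k + h)) K)[X] :=
  MvPolynomial.aeval <| Fin.append (fun a => C (MvPolynomial.X (Fin.castAdd h a)))
    fun b => X * C (MvPolynomial.X (Fin.natAdd k b))

variable {K k h}

theorem exists_scaleTail_eq_X_pow_mul [IsDomain K] (lam : Fin k → ℕ) (mu : Fin h → ℕ)
    (hlm : ∀ a b, mu b ≤ lam a) (Snu : MvPolynomial (Fin (k + h)) K)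
    (hSnu : shiftedVdm (Fin.append lam mu) MvPolynomial.X = Snu * vdmProd MvPolynomial.X)
    (Slam : MvPolynomial (Fin k) K)
    (hSlam : shiftedVdm lam MvPolynomial.X = Slam * vdmProd MvPolynomial.X)
    (Smu : MvPolynomial (Fin h) K)
    (hSmu : shiftedVdm mu MvPolynomial.X = Smu * vdmProd MvPolynomial.X) :
    ∃ S, scaleTail K k h Snu = X ^ (∑ b, mu b) * S ∧
      S.coeff 0 = rename (Fin.castAdd h) Slam * rename (Fin.natAdd k) Smu := by
  set z : Fin k → MvPolynomial (Fin (k + h)) K := fun a => MvPolynomial.X (Fin.castAdd h a)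
  set y : Fin h → MvPolynomial (Fin (k + h)) K := fun b => MvPolynomial.X (Fin.natAdd k b)
  have hsubst : (fun t => scaleTail K k h (MvPolynomial.X t)) =
      Fin.append (fun a => C (z a)) fun b => X * C (y b) :=
    funext fun t => MvPolynomial.aeval_X _ t
  obtain ⟨Q, hQ, hQ0⟩ := shiftedVdm_append_eq_X_pow_mul lam mu hlm z y
  obtain ⟨W, hW, hW0⟩ := shiftedVdm_append_eq_X_pow_mul 0 0 (fun _ _ => le_rfl) z y
  have hPW : scaleTail K k h Snu * (X ^ (∑ b, vdmExp (0 : Fin h → ℕ) b) * W) =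
      X ^ (∑ b, mu b + ∑ b, vdmExp (0 : Fin h → ℕ) b) * Q := by
    have happend : Fin.append (0 : Fin k → ℕ) (0 : Fin h → ℕ) = 0 :=
      Fin.append_castAdd_natAdd (f := 0)
    have := congrArg (scaleTail K k h) hSnu
    rw [map_mul, map_shiftedVdm, map_vdmProd, hsubst, hQ, vdmProd_eq_shiftedVdm_zero,
      ← happend, hW, sum_vdmExp] at this
    exact this.symm
  have hW0ne : W.coeff 0 ≠ 0 := by
    rw [hW0, ← vdmProd_eq_shiftedVdm_zero, ← vdmProd_eq_shiftedVdm_zero]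
    refine mul_ne_zero (mul_ne_zero ?_ ?_) ?_
    · exact pow_ne_zero _ (prod_ne_zero_iff.mpr fun a _ => MvPolynomial.X_ne_zero _)
    · exact vdmProd_ne_zero (MvPolynomial.X_injective.comp (Fin.castAdd_injective k h))
    · exact vdmProd_ne_zero (MvPolynomial.X_injective.comp (Fin.natAdd_injective h k))
  have hz : shiftedVdm lam z = rename (Fin.castAdd h) Slam * shiftedVdm 0 z := by
    simpa only [map_mul, map_shiftedVdm, map_vdmProd, MvPolynomial.rename_X,
      vdmProd_eq_shiftedVdm_zero] using congrArg (rename (Fin.castAdd h)) hSlam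
  have hy : shiftedVdm mu y = rename (Fin.natAdd k) Smu * shiftedVdm 0 y := by
    simpa only [map_mul, map_shiftedVdm, map_vdmProd, MvPolynomial.rename_X,
      vdmProd_eq_shiftedVdm_zero] using congrArg (rename (Fin.natAdd k)) hSmu
  obtain ⟨S, hS, hQS⟩ := exists_eq_X_pow_mul_of_mul_X_pow_mul_eq hPW hW0ne
  refine ⟨S, hS, mul_right_cancel₀ hW0ne ?_⟩
  rw [← hQS, hQ0, hW0, hz, hy]
  ring

end ScaleTail

theorem Fin.append_eq_dite {α : Type*} {m n : ℕ} (u : Fin m → α) (v : Fin n → α) :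
    Fin.append u v = fun t : Fin (m + n) =>
      if ht : (t : ℕ) < m then u ⟨t, ht⟩
      else v ⟨(t : ℕ) - m, Nat.sub_lt_left_of_lt_add (Nat.le_of_not_lt ht) t.isLt⟩ := by
  funext t
  refine Fin.addCases (fun a => ?_) (fun b => ?_) t <;> simp

section Limit

open Filter Topology

variable {K : Type*} {k h : ℕ}

theorem eval_append_mul_eq_eval_map_scaleTail [CommRing K] (p : MvPolynomial (Fin (k + h)) K)
    (z : Fin k → K) (y : Fin h → K) (ε : K) :
    MvPolynomial.eval (Fin.append z fun b => ε * y b) p =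
      ((scaleTail K k h p).map (MvPolynomial.eval (Fin.append z y))).eval ε := by
  have hhom : MvPolynomial.eval (Fin.append z fun b => ε * y b) = (evalRingHom ε).comp
      ((mapRingHom (MvPolynomial.eval (Fin.append z y))).comp (scaleTail K k h).toRingHom) := by
    refine MvPolynomial.ringHom_ext (fun r => by simp) fun t => ?_
    refine Fin.addCases (fun a => ?_) (fun b => ?_) t
    · simp [scaleTail]
    · simp [scaleTail, mul_comm ε]
  rw [hhom]
  rfl

theorem tendsto_eval_append_mul_div_pow [Field K] [TopologicalSpace K] [IsTopologicalRing K]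
    {p : MvPolynomial (Fin (k + h)) K} {m : ℕ} {S : (MvPolynomial (Fin (k + h)) K)[X]}
    (hS : scaleTail K k h p = X ^ m * S) (z : Fin k → K) (y : Fin h → K) :
    Tendsto (fun ε => MvPolynomial.eval (Fin.append z fun b => ε * y b) p / ε ^ m) (𝓝[≠] 0)
      (𝓝 (MvPolynomial.eval (Fin.append z y) (S.coeff 0))) := by
  set g := S.map (MvPolynomial.eval (Fin.append z y))
  have hg0 : g.eval 0 = MvPolynomial.eval (Fin.append z y) (S.coeff 0) := by
    rw [← coeff_zero_eq_eval_zero, coeff_map]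
  refine hg0 ▸ (g.continuous.tendsto 0).mono_left nhdsWithin_le_nhds |>.congr' ?_
  filter_upwards [self_mem_nhdsWithin] with ε (hε : ε ≠ 0)
  rw [eval_append_mul_eq_eval_map_scaleTail, hS, Polynomial.map_mul, Polynomial.map_pow, map_X,
    eval_mul, eval_pow, eval_X, mul_div_cancel_left₀ _ (pow_ne_zero m hε)]

end Limit

end SchurSplitting

open MvPolynomial in
/-- Splitting formula: if `ν` is the concatenation of partitions `λ` (length `k`) and `μ`
(length `h`) with `λ_k ≥ μ_1`, then for all `z ∈ ℂ^k`, `y ∈ ℂ^h`,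
`s_ν(z, εy)/ε^{|μ|} → s_λ(z) s_μ(y)` as `ε → 0`, `ε ≠ 0`.
`Snu`, `Slam`, `Smu` are the Schur polynomials of `ν`, `λ`, `μ`, characterized by
`Δ_λ = s_λ * Δ`. -/
theorem schur_splitting_limit (k h : ℕ) (lam : Fin k → ℕ) (mu : Fin h → ℕ)
    (hlm : ∀ (i : Fin k) (j : Fin h), mu j ≤ lam i)
    (Snu : MvPolynomial (Fin (k + h)) ℂ)
    (hSnu : shiftedVdm (fun t : Fin (k + h) =>
        if ht : (t : ℕ) < k then lam ⟨(t : ℕ), ht⟩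
        else mu ⟨(t : ℕ) - k, by have := t.isLt; omega⟩) (fun i => X i)
      = Snu * vdmProd (fun i => X i))
    (Slam : MvPolynomial (Fin k) ℂ)
    (hSlam : shiftedVdm lam (fun i => X i) = Slam * vdmProd (fun i => X i))
    (Smu : MvPolynomial (Fin h) ℂ)
    (hSmu : shiftedVdm mu (fun i => X i) = Smu * vdmProd (fun i => X i))
    (z : Fin k → ℂ) (y : Fin h → ℂ) :
    Filter.Tendsto (fun ε : ℂ =>
        MvPolynomial.eval (fun t : Fin (k + h) =>
          if ht : (t : ℕ) < k then z ⟨(t : ℕ), ht⟩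
          else ε * y ⟨(t : ℕ) - k, by have := t.isLt; omega⟩) Snu / ε ^ (∑ j, mu j))
      (nhdsWithin 0 {(0 : ℂ)}ᶜ)
      (nhds (MvPolynomial.eval z Slam * MvPolynomial.eval y Smu)) := by
  rw [← Fin.append_eq_dite] at hSnu
  obtain ⟨S, hS, hS0⟩ := exists_scaleTail_eq_X_pow_mul lam mu hlm Snu hSnu Slam hSlam Smu hSmu
  have hlim := tendsto_eval_append_mul_div_pow hS z y
  simp only [Fin.append_eq_dite] at hlim
  convert hlim using 2
  rw [hS0, map_mul, eval_rename, eval_rename]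
  simp [Function.comp_def]
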